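/- Let $G$ be a graph on $n$ vertices and define $\mathrm{TH}(G) = \{x \in \mathbb{R}_+^n : \exists X \in \mathbb{S}_+^{1+n},\ X_{00} = 1,\ X_{ii} = X_{0i}\ \forall i,\ X_{ij} = 0\ \forall ij \in E\}$. Then $x \in \mathrm{TH}(G)$ if and only if there exist unit vectors $d, w_1, \ldots, w_n$ in some real inner product space such that $x_i = \langle d, w_i\rangle^2$ for all $i$ and $\langle w_i, w_j\rangle = 0$ for all edges $ij \in E$. -/

import Mathlib

/-!
Factor the certificate as a Gram matrix `X = (⟪u a, u b⟫)`. Then `d := u₀` is a unit vector and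
`⟪d, uᵢ⟫ = X₀ᵢ = Xᵢᵢ = ‖uᵢ‖²`, so writing `uᵢ = ‖uᵢ‖ wᵢ` with `wᵢ` a unit vector gives
`⟪d, wᵢ⟫ = ‖uᵢ‖ = √xᵢ`. When `uᵢ = 0`, the direction `wᵢ` is taken from an orthonormal family in
an extra orthogonal summand, so it is orthogonal to every other direction. Conversely, the Gram
matrix of `d, ⟪d, w₁⟫ w₁, …, ⟪d, wₙ⟫ wₙ` is a certificate for `x`.
-/

open Matrix
open scoped InnerProductSpace ComplexOrder

theorem exists_norm_smul_unit_of_orthonormal {ι E : Type*} [NormedAddCommGroup E]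
    [InnerProductSpace ℝ E] {u e : ι → E} (he : Orthonormal ℝ e)
    (hue : ∀ a b, ⟪u a, e b⟫_ℝ = 0) :
    ∃ w : ι → E, (∀ a, ‖w a‖ = 1) ∧ (∀ a, u a = ‖u a‖ • w a) ∧
      ∀ a b, a ≠ b → ⟪u a, u b⟫_ℝ = 0 → ⟪w a, w b⟫_ℝ = 0 := by
  classical
  refine ⟨fun a => if u a = 0 then e a else ‖u a‖⁻¹ • u a, fun a => ?_, fun a => ?_,
    fun a b hab huab => ?_⟩
  · dsimp only
    split_ifs with h
    · exact he.1 a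
    · exact norm_smul_inv_norm h
  · dsimp only
    split_ifs with h
    · simp [h]
    · exact (smul_inv_smul₀ (norm_ne_zero_iff.mpr h) _).symm
  · have hea : ∀ c, ⟪e a, u c⟫_ℝ = 0 := fun c => real_inner_comm (u c) (e a) ▸ hue c a
    dsimp only
    split_ifs <;>
      simp [he.2 hab, real_inner_smul_left, real_inner_smul_right, hue, hea, huab]

namespace Matrix

open scoped MatrixOrder in
theorem PosSemidef.exists_gram_eq {𝕜 ι : Type*} [RCLike 𝕜] [Fintype ι] {X : Matrix ι ι 𝕜}
    (hX : X.PosSemidef) : ∃ u : ι → EuclideanSpace 𝕜 ι, gram 𝕜 u = X := by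
  classical
  obtain ⟨B, rfl⟩ := CStarAlgebra.nonneg_iff_eq_star_mul_self.mp hX.nonneg
  refine ⟨fun a => WithLp.toLp 2 fun k => B k a, ?_⟩
  ext a b
  simp [PiLp.inner_apply, mul_apply, mul_comm]

theorem PosSemidef.exists_gram_eq_norm_smul_unit {ι : Type} [Fintype ι]
    {X : Matrix ι ι ℝ} (hX : X.PosSemidef) :
    ∃ u w : ι → WithLp 2 (EuclideanSpace ℝ ι × EuclideanSpace ℝ ι),
      gram ℝ u = X ∧ (∀ a, ‖w a‖ = 1) ∧ (∀ a, u a = ‖u a‖ • w a) ∧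
        ∀ a b, a ≠ b → X a b = 0 → ⟪w a, w b⟫_ℝ = 0 := by
  classical
  obtain ⟨u₀, rfl⟩ := hX.exists_gram_eq
  set u : ι → WithLp 2 (EuclideanSpace ℝ ι × EuclideanSpace ℝ ι) :=
    fun a => WithLp.toLp 2 (u₀ a, 0)
  set e : ι → WithLp 2 (EuclideanSpace ℝ ι × EuclideanSpace ℝ ι) :=
    fun b => WithLp.toLp 2 (0, EuclideanSpace.single b 1)
  have hgram : gram ℝ u = gram ℝ u₀ := by ext a b; simp [u]
  have he : Orthonormal ℝ e := by
    rw [orthonormal_iff_ite]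
    intro a b
    simp [e, EuclideanSpace.inner_single_left, eq_comm]
  obtain ⟨w, hw, huw, horth⟩ :=
    exists_norm_smul_unit_of_orthonormal (u := u) he fun a b => by simp [u, e]
  exact ⟨u, w, hgram, hw, huw, fun a b hab h => horth a b hab (by rwa [← hgram] at h)⟩

end Matrix

theorem exists_orthonormalRepresentation_of_posSemidef {V : Type} [Fintype V]
    (G : SimpleGraph V) {X : Matrix (Fin 1 ⊕ V) (Fin 1 ⊕ V) ℝ} (hX : X.PosSemidef)
    (h00 : X (.inl 0) (.inl 0) = 1) (hdiag : ∀ i, X (.inr i) (.inr i) = X (.inl 0) (.inr i))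
    (hedge : ∀ i j, G.Adj i j → X (.inr i) (.inr j) = 0) :
    ∃ (E : Type) (_ : NormedAddCommGroup E) (_ : InnerProductSpace ℝ E) (d : E) (w : V → E),
      ‖d‖ = 1 ∧ (∀ i, ‖w i‖ = 1) ∧ (∀ i, X (.inr i) (.inr i) = ⟪d, w i⟫_ℝ ^ 2) ∧
        ∀ i j, G.Adj i j → ⟪w i, w j⟫_ℝ = 0 := by
  obtain ⟨u, w, rfl, hw, huw, horth⟩ := hX.exists_gram_eq_norm_smul_unit
  have hnorm : ∀ a, gram ℝ u a a = ‖u a‖ ^ 2 := fun a => real_inner_self_eq_norm_sq (u a)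
  have hu₀ : u (.inl 0) = w (.inl 0) := by
    have h : ‖u (.inl 0)‖ = 1 := by
      rw [← pow_eq_one_iff_of_nonneg (norm_nonneg _) two_ne_zero, ← hnorm, h00]
    rw [huw, h, one_smul]
  refine ⟨_, inferInstance, inferInstance, w (.inl 0), w ∘ .inr, hw _, fun i => hw _, fun i => ?_,
    fun i j hij => horth _ _ (by simpa using hij.ne) (hedge i j hij)⟩
  have hinner : ‖u (.inr i)‖ * ⟪w (.inl 0), w (.inr i)⟫_ℝ = ‖u (.inr i)‖ ^ 2 := by
    rw [← real_inner_smul_right, ← huw, ← hu₀, ← hnorm, hdiag, gram_apply]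
  rcases eq_or_ne ‖u (.inr i)‖ 0 with h | h
  · have hX : gram ℝ u (.inl 0) (.inr i) = 0 := by rw [← hdiag, hnorm, h, sq, zero_mul]
    simp [h, horth _ _ Sum.inl_ne_inr hX]
  · rw [sq, mul_right_inj' h] at hinner
    simp [hinner]

theorem exists_posSemidef_of_orthonormalRepresentation {V E : Type*} [Finite V]
    [NormedAddCommGroup E] [InnerProductSpace ℝ E] (G : SimpleGraph V) {d : E} {w : V → E}
    (hd : ‖d‖ = 1) (hw : ∀ i, ‖w i‖ = 1) (horth : ∀ i j, G.Adj i j → ⟪w i, w j⟫_ℝ = 0) :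
    ∃ X : Matrix (Fin 1 ⊕ V) (Fin 1 ⊕ V) ℝ, X.PosSemidef ∧ X (.inl 0) (.inl 0) = 1 ∧
      (∀ i, X (.inr i) (.inr i) = X (.inl 0) (.inr i)) ∧
      (∀ i j, G.Adj i j → X (.inr i) (.inr j) = 0) ∧
      ∀ i, X (.inr i) (.inr i) = ⟪d, w i⟫_ℝ ^ 2 := by
  refine ⟨gram ℝ (Sum.elim (fun _ => d) fun i => ⟪d, w i⟫_ℝ • w i), posSemidef_gram ℝ _, ?_,
    fun i => ?_, fun i j hij => ?_, fun i => ?_⟩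
  · simp [hd]
  · simp [real_inner_smul_right, norm_smul, hw, sq]
  · simp [real_inner_smul_left, real_inner_smul_right, horth i j hij]
  · simp [norm_smul, hw, sq]

theorem theta_body_iff_orthonormal_representation
    (n : ℕ) (G : SimpleGraph (Fin n)) (x : Fin n → ℝ) :
    ((∀ i, 0 ≤ x i) ∧
      ∃ X : Matrix (Fin 1 ⊕ Fin n) (Fin 1 ⊕ Fin n) ℝ,
        X.PosSemidef ∧
        X (Sum.inl 0) (Sum.inl 0) = 1 ∧
        (∀ i, X (Sum.inr i) (Sum.inr i) = X (Sum.inl 0) (Sum.inr i)) ∧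
        (∀ i j, G.Adj i j → X (Sum.inr i) (Sum.inr j) = 0) ∧
        (∀ i, X (Sum.inr i) (Sum.inr i) = x i)) ↔
    (∃ (E : Type) (_ : NormedAddCommGroup E) (_ : InnerProductSpace ℝ E)
        (d : E) (w : Fin n → E),
        ‖d‖ = 1 ∧ (∀ i, ‖w i‖ = 1) ∧
        (∀ i, x i = (inner ℝ d (w i) : ℝ) ^ 2) ∧
        (∀ i j, G.Adj i j → (inner ℝ (w i) (w j) : ℝ) = 0)) := by
  constructor
  · rintro ⟨-, X, hX, h00, hdiag, hedge, hXx⟩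
    obtain ⟨E, _, _, d, w, hd, hw, hdw, horth⟩ :=
      exists_orthonormalRepresentation_of_posSemidef G hX h00 hdiag hedge
    exact ⟨E, _, _, d, w, hd, hw, fun i => (hXx i).symm.trans (hdw i), horth⟩
  · rintro ⟨E, _, _, d, w, hd, hw, hx, horth⟩
    obtain ⟨X, hX, h00, hdiag, hedge, hXd⟩ :=
      exists_posSemidef_of_orthonormalRepresentation G hd hw horth
    exact ⟨fun i => hx i ▸ sq_nonneg _, X, hX, h00, hdiag, hedge,
      fun i => (hXd i).trans (hx i).symm⟩
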